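/- Let F be a nonempty closed set in ℝⁿ and Ω its complement. Then there exists a countable collection of closed cubes {Q_k} with sides parallel to the axes such that (i) Ω = ⋃ Q_k; (ii) the interiors of the Q_k are pairwise disjoint; (iii) for each k, diam(Q_k) ≤ dist(Q_k, F) ≤ 4·diam(Q_k). -/

import Mathlib

/-!
Tile `ℝⁿ` by dyadic cubes of every side `2 ^ k`, and call a cube `Q` a candidate when it contains
a point whose distance to `F` lies in `[2 diam Q, 4 diam Q)`. The triangle inequality gives
`diam Q ≤ dist(Q, F) < 4 diam Q` for candidates, and since consecutive sides differ by a factor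
two, every point of `Fᶜ` lies in a candidate. A candidate containing another has less than four
times its diameter, so it is at most one generation larger; hence every candidate lies in a
maximal one. Dyadic cubes whose interiors meet are nested, so distinct maximal candidates have
disjoint interiors.
-/

open Set Metric MeasureTheory

/-- Closed axis-parallel cube in `ℝⁿ` with center `c` and half side length `r`. -/
def cube (n : ℕ) (c : EuclideanSpace ℝ (Fin n)) (r : ℝ) : Set (EuclideanSpace ℝ (Fin n)) :=
  {x | ∀ i, |x i - c i| ≤ r}

/-- Distance between two sets. -/
noncomputable def sDist {α : Type*} [PseudoMetricSpace α] (s t : Set α) : ℝ :=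
  sInf {d : ℝ | ∃ x ∈ s, ∃ y ∈ t, d = dist x y}

section SetDist

variable {α : Type*} [PseudoMetricSpace α] {s t u : Set α}

lemma sDist_le_dist {x y : α} (hx : x ∈ s) (hy : y ∈ t) : sDist s t ≤ dist x y :=
  csInf_le ⟨0, by rintro _ ⟨a, -, b, -, rfl⟩; exact dist_nonneg⟩ ⟨x, hx, y, hy, rfl⟩

lemma le_sDist (hs : s.Nonempty) (ht : t.Nonempty) {b : ℝ}
    (h : ∀ x ∈ s, ∀ y ∈ t, b ≤ dist x y) : b ≤ sDist s t := by
  obtain ⟨x, hx⟩ := hs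
  obtain ⟨y, hy⟩ := ht
  refine le_csInf ⟨_, x, hx, y, hy, rfl⟩ ?_
  rintro _ ⟨x', hx', y', hy', rfl⟩
  exact h x' hx' y' hy'

lemma sDist_le_infDist {x : α} (hx : x ∈ s) (ht : t.Nonempty) : sDist s t ≤ infDist x t :=
  (le_infDist ht).2 fun _ hy => sDist_le_dist hx hy

lemma sDist_le_sDist_of_subset (hst : s ⊆ t) (hs : s.Nonempty) (hu : u.Nonempty) :
    sDist t u ≤ sDist s u :=
  le_sDist hs hu fun _ hx _ hy => sDist_le_dist (hst hx) hy

end SetDist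

section WhitneyComparable

variable {α : Type*} [PseudoMetricSpace α] {F s t : Set α}

def WhitneyComparable (F s : Set α) : Prop :=
  ∃ x ∈ s, 2 * diam s ≤ infDist x F ∧ infDist x F < 4 * diam s

namespace WhitneyComparable

lemma diam_le_sDist (h : WhitneyComparable F s) (hs : Bornology.IsBounded s)
    (hF : F.Nonempty) : diam s ≤ sDist s F := by
  obtain ⟨x, hx, hlow, -⟩ := h
  refine le_sDist ⟨x, hx⟩ hF fun x' hx' y hy => ?_
  have := infDist_le_dist_of_mem (x := x) hy
  have := dist_le_diam_of_mem hs hx hx'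
  have := dist_triangle x x' y
  linarith

lemma sDist_lt (h : WhitneyComparable F s) (hF : F.Nonempty) : sDist s F < 4 * diam s := by
  obtain ⟨x, hx, -, hup⟩ := h
  exact (sDist_le_infDist hx hF).trans_lt hup

lemma disjoint (h : WhitneyComparable F s) (hs : Bornology.IsBounded s) : Disjoint s F := by
  obtain ⟨x, hx, hlow, hup⟩ := h
  refine Set.disjoint_left.2 fun z hz hzF => ?_
  have := infDist_le_dist_of_mem (x := x) hzF
  have := dist_le_diam_of_mem hs hx hz
  have := infDist_nonneg (x := x) (s := F)
  linarith

lemma nonempty (h : WhitneyComparable F s) : s.Nonempty :=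
  let ⟨x, hx, _⟩ := h
  ⟨x, hx⟩

lemma diam_lt_of_subset (hs : WhitneyComparable F s) (ht : WhitneyComparable F t) (hst : s ⊆ t)
    (ht' : Bornology.IsBounded t) (hF : F.Nonempty) : diam t < 4 * diam s := by
  calc diam t ≤ sDist t F := ht.diam_le_sDist ht' hF
    _ ≤ sDist s F := sDist_le_sDist_of_subset hst hs.nonempty hF
    _ < 4 * diam s := hs.sDist_lt hF

end WhitneyComparable

end WhitneyComparable

section Cube

variable {n : ℕ}

lemma interior_cube (c : EuclideanSpace ℝ (Fin n)) (r : ℝ) :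
    interior (cube n c r) = {x | ∀ i, |x i - c i| < r} := by
  let e := (EuclideanSpace.equiv (Fin n) ℝ).toHomeomorph
  have he : ∀ x i, e x i = x i := fun _ _ => rfl
  have hcube : cube n c r = e ⁻¹' univ.pi fun i => Icc (c i - r) (c i + r) := by
    ext x
    simp only [cube, mem_ofPred_eq, mem_preimage, mem_univ_pi, mem_Icc, abs_le, he]
    exact forall_congr' fun i => by constructor <;> rintro ⟨h₁, h₂⟩ <;> constructor <;> linarith
  rw [hcube, ← e.preimage_interior, interior_pi_set finite_univ]
  ext x
  simp only [interior_Icc, mem_ofPred_eq, mem_preimage, mem_univ_pi, mem_Ioo, abs_lt, he]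
  exact forall_congr' fun i => by constructor <;> rintro ⟨h₁, h₂⟩ <;> constructor <;> linarith

lemma dist_le_sqrt_mul {x y : EuclideanSpace ℝ (Fin n)} {d : ℝ} (hd : 0 ≤ d)
    (h : ∀ i, |x i - y i| ≤ d) : dist x y ≤ √n * d := by
  calc dist x y = √(∑ i, dist (x i) (y i) ^ 2) := EuclideanSpace.dist_eq x y
    _ ≤ √(∑ _i : Fin n, d ^ 2) := by
      gcongr with i
      exact (Real.dist_eq _ _).trans_le (h i)
    _ = √n * d := by simp [Real.sqrt_mul, hd]

lemma dist_le_of_mem_cube {c x y : EuclideanSpace ℝ (Fin n)} {r : ℝ} (hr : 0 ≤ r)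
    (hx : x ∈ cube n c r) (hy : y ∈ cube n c r) : dist x y ≤ √n * (2 * r) :=
  dist_le_sqrt_mul (by positivity) fun i =>
    (abs_sub_le (x i) (c i) (y i)).trans (by rw [abs_sub_comm (c i)]; linarith [hx i, hy i])

lemma isBounded_cube (c : EuclideanSpace ℝ (Fin n)) {r : ℝ} (hr : 0 ≤ r) :
    Bornology.IsBounded (cube n c r) :=
  isBounded_iff.2 ⟨_, fun _ hx _ hy => dist_le_of_mem_cube hr hx hy⟩

lemma diam_cube (c : EuclideanSpace ℝ (Fin n)) {r : ℝ} (hr : 0 ≤ r) :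
    diam (cube n c r) = √n * (2 * r) := by
  refine le_antisymm
    (diam_le_of_forall_dist_le (by positivity) fun _ hx _ hy => dist_le_of_mem_cube hr hx hy) ?_
  let a : EuclideanSpace ℝ (Fin n) := WithLp.toLp 2 fun i => c i - r
  let b : EuclideanSpace ℝ (Fin n) := WithLp.toLp 2 fun i => c i + r
  have ha : a ∈ cube n c r := fun i => by simp [a, abs_of_nonneg hr]
  have hb : b ∈ cube n c r := fun i => by simp [b, abs_of_nonneg hr]
  have hab : dist b a = √n * (2 * r) := by
    have hi : ∀ i, dist (b i) (a i) = 2 * r := fun i => by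
      simp only [a, b, Real.dist_eq, add_sub_sub_cancel, ← two_mul,
        abs_of_nonneg (by positivity : 0 ≤ 2 * r)]
    simp [EuclideanSpace.dist_eq, hi, Real.sqrt_mul, hr]
  exact hab ▸ dist_le_diam_of_mem (isBounded_cube c hr) hb ha

end Cube

section Dyadic

variable {n : ℕ} {k k' : ℤ} {m m' : Fin n → ℤ} {x : EuclideanSpace ℝ (Fin n)}

noncomputable def dyadicCenter (n : ℕ) (k : ℤ) (m : Fin n → ℤ) : EuclideanSpace ℝ (Fin n) :=
  WithLp.toLp 2 fun i => (m i + 1 / 2) * 2 ^ k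

/-- The dyadic cube `∏ i, [m i * 2 ^ k, (m i + 1) * 2 ^ k]` of side `2 ^ k`. -/
noncomputable def dyadicCube (n : ℕ) (k : ℤ) (m : Fin n → ℤ) : Set (EuclideanSpace ℝ (Fin n)) :=
  cube n (dyadicCenter n k m) (2 ^ k / 2)

lemma mem_dyadicCube :
    x ∈ dyadicCube n k m ↔ ∀ i, m i * 2 ^ k ≤ x i ∧ x i ≤ (m i + 1) * 2 ^ k := by
  simp only [dyadicCube, cube, dyadicCenter, mem_ofPred_eq, PiLp.toLp_apply, abs_le]
  exact forall_congr' fun i => by constructor <;> rintro ⟨h₁, h₂⟩ <;> constructor <;> linarith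

lemma lt_of_mem_interior_dyadicCube (hx : x ∈ interior (dyadicCube n k m)) (i : Fin n) :
    m i * 2 ^ k < x i ∧ x i < (m i + 1) * 2 ^ k := by
  rw [dyadicCube, interior_cube] at hx
  have := abs_lt.1 (hx i)
  simp only [dyadicCenter, PiLp.toLp_apply] at this
  constructor <;> linarith [this.1, this.2]

lemma isBounded_dyadicCube : Bornology.IsBounded (dyadicCube n k m) :=
  isBounded_cube _ (by positivity)

lemma diam_dyadicCube : diam (dyadicCube n k m) = √n * 2 ^ k := by
  rw [dyadicCube, diam_cube _ (by positivity)]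
  ring

lemma mem_dyadicCube_floor (x : EuclideanSpace ℝ (Fin n)) (k : ℤ) :
    x ∈ dyadicCube n k fun i => ⌊x i / 2 ^ k⌋ :=
  mem_dyadicCube.2 fun _ =>
    ⟨(le_div_iff₀ (by positivity)).1 (Int.floor_le _),
      (div_le_iff₀ (by positivity)).1 (Int.lt_floor_add_one _).le⟩

lemma eq_of_mem_interior_dyadicCube (hx : x ∈ interior (dyadicCube n k m))
    (hx' : x ∈ interior (dyadicCube n k m')) : m = m' := by
  funext i
  obtain ⟨h₁, h₂⟩ := lt_of_mem_interior_dyadicCube hx i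
  obtain ⟨h₁', h₂'⟩ := lt_of_mem_interior_dyadicCube hx' i
  have hk : (0 : ℝ) ≤ 2 ^ k := by positivity
  have h : (m i : ℝ) < m' i + 1 := lt_of_mul_lt_mul_right (h₁.trans h₂') hk
  have h' : (m' i : ℝ) < m i + 1 := lt_of_mul_lt_mul_right (h₁'.trans h₂) hk
  have : m i < m' i + 1 := by exact_mod_cast h
  have : m' i < m i + 1 := by exact_mod_cast h'
  omega

lemma dyadicCube_subset_parent (k : ℤ) (j : ℕ) (m : Fin n → ℤ) :
    dyadicCube n k m ⊆ dyadicCube n (k + j) fun i => m i / 2 ^ j := by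
  have hj : (0 : ℤ) < 2 ^ j := by positivity
  have hscale : ∀ a : ℤ, (a : ℝ) * 2 ^ (k + j) = ((a * 2 ^ j : ℤ) : ℝ) * 2 ^ k := fun a => by
    rw [zpow_add₀ two_ne_zero, zpow_natCast]
    push_cast
    ring
  intro x hx
  rw [mem_dyadicCube] at hx ⊢
  refine fun i => ⟨?_, ?_⟩
  · calc ((m i / 2 ^ j : ℤ) : ℝ) * 2 ^ (k + j) = ((m i / 2 ^ j * 2 ^ j : ℤ) : ℝ) * 2 ^ k :=
          hscale _
      _ ≤ m i * 2 ^ k := by gcongr; exact_mod_cast Int.ediv_mul_le _ hj.ne'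
      _ ≤ x i := (hx i).1
  · calc x i ≤ (m i + 1) * 2 ^ k := (hx i).2
      _ ≤ (((m i / 2 ^ j + 1) * 2 ^ j : ℤ) : ℝ) * 2 ^ k := by
          have : m i + 1 ≤ (m i / 2 ^ j + 1) * 2 ^ j := Int.lt_ediv_add_one_mul_self _ hj
          gcongr
          simpa using Int.cast_le (R := ℝ) |>.2 this
      _ = ((m i / 2 ^ j : ℤ) + 1) * 2 ^ (k + j) := by rw [← hscale]; push_cast; ring

lemma dyadicCube_subset_of_mem_interior (hk : k ≤ k') (hx : x ∈ interior (dyadicCube n k m))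
    (hx' : x ∈ interior (dyadicCube n k' m')) : dyadicCube n k m ⊆ dyadicCube n k' m' := by
  obtain ⟨j, rfl⟩ := Int.le.dest hk
  have hparent := dyadicCube_subset_parent k j m
  rwa [eq_of_mem_interior_dyadicCube (interior_mono hparent hx) hx'] at hparent

end Dyadic

section WhitneyDyadic

variable {n : ℕ} {F : Set (EuclideanSpace ℝ (Fin n))} {k k' : ℤ} {m m' : Fin n → ℤ}
  {x : EuclideanSpace ℝ (Fin n)}

lemma lt_add_two_of_dyadicCube_subset (hn : 0 < n) (hF : F.Nonempty)
    (h : WhitneyComparable F (dyadicCube n k m)) (h' : WhitneyComparable F (dyadicCube n k' m'))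
    (hsub : dyadicCube n k m ⊆ dyadicCube n k' m') : k' < k + 2 := by
  have hdiam := h.diam_lt_of_subset h' hsub isBounded_dyadicCube hF
  rw [diam_dyadicCube, diam_dyadicCube] at hdiam
  have hpow : (2 : ℝ) ^ k' < 2 ^ (k + 2) := by
    rw [zpow_add₀ two_ne_zero]
    have : 0 < √(n : ℝ) := Real.sqrt_pos.2 (by exact_mod_cast hn)
    nlinarith
  exact (zpow_lt_zpow_iff_right₀ one_lt_two).1 hpow

lemma exists_whitneyComparable_dyadicCube_mem (hn : 0 < n) (hne : F.Nonempty)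
    (hclosed : IsClosed F) (hx : x ∉ F) :
    ∃ k m, WhitneyComparable F (dyadicCube n k m) ∧ x ∈ dyadicCube n k m := by
  have hd := (hclosed.notMem_iff_infDist_pos hne).1 hx
  have hs : 0 < 2 * √(n : ℝ) := by have := Real.sqrt_pos.2 (Nat.cast_pos.2 hn); positivity
  obtain ⟨k, hk₁, hk₂⟩ := exists_mem_Ico_zpow (div_pos hd hs) one_lt_two
  rw [le_div_iff₀ hs] at hk₁
  rw [div_lt_iff₀ hs, zpow_add_one₀ two_ne_zero] at hk₂
  refine ⟨k, _, ⟨x, mem_dyadicCube_floor x k, ?_, ?_⟩, mem_dyadicCube_floor x k⟩ <;>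
    rw [diam_dyadicCube] <;> linarith

variable (F) in
/-- `p = (k, m)` stands for `dyadicCube n k m`; maximality is among candidates containing it. -/
def IsMaximalWhitneyDyadic (p : ℤ × (Fin n → ℤ)) : Prop :=
  WhitneyComparable F (dyadicCube n p.1 p.2) ∧
    ∀ q : ℤ × (Fin n → ℤ), WhitneyComparable F (dyadicCube n q.1 q.2) →
      dyadicCube n p.1 p.2 ⊆ dyadicCube n q.1 q.2 → q.1 ≤ p.1

lemma exists_isMaximalWhitneyDyadic_superset (hn : 0 < n) (hne : F.Nonempty)
    (h : WhitneyComparable F (dyadicCube n k m)) :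
    ∃ p, IsMaximalWhitneyDyadic F p ∧ dyadicCube n k m ⊆ dyadicCube n p.1 p.2 := by
  obtain ⟨k₀, ⟨m₀, h₀, hsub₀⟩, hmax⟩ := Int.exists_greatest_of_bdd
    (P := fun k' => ∃ m', WhitneyComparable F (dyadicCube n k' m') ∧
      dyadicCube n k m ⊆ dyadicCube n k' m')
    ⟨k + 1, fun k' ⟨_, h', hsub⟩ => by
      have := lt_add_two_of_dyadicCube_subset hn hne h h' hsub
      omega⟩
    ⟨k, m, h, subset_rfl⟩
  exact ⟨(k₀, m₀), ⟨h₀, fun q hq hsub => hmax q.1 ⟨q.2, hq, hsub₀.trans hsub⟩⟩, hsub₀⟩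

lemma exists_isMaximalWhitneyDyadic_mem (hne : F.Nonempty) (hclosed : IsClosed F) (hx : x ∉ F) :
    ∃ p, IsMaximalWhitneyDyadic F p ∧ x ∈ dyadicCube n p.1 p.2 := by
  have hn : 0 < n := Nat.pos_of_ne_zero fun h0 => by
    subst h0
    obtain ⟨y, hy⟩ := hne
    exact hx (Subsingleton.elim y x ▸ hy)
  obtain ⟨k, m, h, hxQ⟩ := exists_whitneyComparable_dyadicCube_mem hn hne hclosed hx
  obtain ⟨p, hp, hsub⟩ := exists_isMaximalWhitneyDyadic_superset hn hne h
  exact ⟨p, hp, hsub hxQ⟩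

lemma IsMaximalWhitneyDyadic.eq_of_mem_interior {p q : ℤ × (Fin n → ℤ)}
    (hp : IsMaximalWhitneyDyadic F p) (hq : IsMaximalWhitneyDyadic F q)
    (hxp : x ∈ interior (dyadicCube n p.1 p.2)) (hxq : x ∈ interior (dyadicCube n q.1 q.2)) :
    p = q := by
  wlog hpq : p.1 ≤ q.1 generalizing p q
  · exact (this hq hp hxq hxp (le_of_not_ge hpq)).symm
  obtain ⟨k, m⟩ := p
  obtain ⟨k', m'⟩ := q
  have hsub := dyadicCube_subset_of_mem_interior hpq hxp hxq
  obtain rfl : k = k' := le_antisymm hpq (hp.2 _ hq.1 hsub)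
  exact congrArg _ (eq_of_mem_interior_dyadicCube hxp hxq)

end WhitneyDyadic

/-- **Whitney decomposition.** For a nonempty closed set `F ⊆ ℝⁿ`, its complement can be
decomposed into countably many closed axis-parallel cubes with pairwise disjoint interiors
satisfying `diam Q_k ≤ dist(Q_k, F) ≤ 4 diam Q_k`. -/
theorem whitney_decomposition (n : ℕ) (F : Set (EuclideanSpace ℝ (Fin n)))
    (hne : F.Nonempty) (hclosed : IsClosed F) :
    ∃ (ι : Type) (_ : Countable ι) (c : ι → EuclideanSpace ℝ (Fin n)) (r : ι → ℝ),
      (∀ k, 0 < r k) ∧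
      Fᶜ = ⋃ k, cube n (c k) (r k) ∧
      (∀ k l, k ≠ l → interior (cube n (c k) (r k)) ∩ interior (cube n (c l) (r l)) = ∅) ∧
      (∀ k, Metric.diam (cube n (c k) (r k)) ≤ sDist (cube n (c k) (r k)) F ∧
        sDist (cube n (c k) (r k)) F ≤ 4 * Metric.diam (cube n (c k) (r k))) := by
  refine ⟨{p // IsMaximalWhitneyDyadic F p}, inferInstance, fun p => dyadicCenter n p.1.1 p.1.2,
    fun p => 2 ^ p.1.1 / 2, fun p => by positivity, ?_, ?_, ?_⟩
  · ext x
    simp only [mem_compl_iff, mem_iUnion]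
    refine ⟨fun hx => ?_, fun ⟨p, hxp⟩ =>
      Set.disjoint_left.1 (p.2.1.disjoint isBounded_dyadicCube) hxp⟩
    obtain ⟨p, hp, hxp⟩ := exists_isMaximalWhitneyDyadic_mem hne hclosed hx
    exact ⟨⟨p, hp⟩, hxp⟩
  · refine fun p q hpq => eq_empty_iff_forall_notMem.2 fun x ⟨hxp, hxq⟩ => hpq ?_
    exact Subtype.ext (p.2.eq_of_mem_interior q.2 hxp hxq)
  · exact fun p => ⟨p.2.1.diam_le_sDist isBounded_dyadicCube hne, (p.2.1.sDist_lt hne).le⟩
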